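/- For every connected simple graph G on n vertices with maximum degree Δ, one has 2·ξ(G) + 2(n−1) ≤ Δ·π(G). -/

import Mathlib

/-!
Take a routing `R` realising `π(G)` and a vertex `x` of maximal load `ξ(G,R) ≥ ξ(G)`, and count
the pairs (path of `R`, edge at `x` on it). A path through `x` as an internal vertex enters and
leaves `x` along two different edges, and each of the `2(n-1)` paths starting or ending at `x`
uses at least one edge at `x`; so the count is at least `2ξ(G,R) + 2(n-1)`. Counted edge by
edge, it is at most `deg x · π(G,R) ≤ Δ·π(G)`.
-/

open Finset

namespace Forwarding

variable {V : Type*} [Fintype V] [DecidableEq V]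

/-- A routing of a graph `G`: for every ordered pair of vertices, a fixed path.
(For `x = y` the path condition forces the trivial walk, so only the
`n(n-1)` paths between distinct vertices matter.) -/
structure Routing (G : SimpleGraph V) where
  walk : ∀ x y : V, G.Walk x y
  isPath : ∀ x y : V, (walk x y).IsPath

/-- A routing is minimal if every specified path is a shortest path. -/
def Routing.IsMinimal {G : SimpleGraph V} (R : Routing G) : Prop :=
  ∀ x y : V, (R.walk x y).length = G.dist x y

/-- The load of a vertex `x`: the number of paths of the routing passing
through `x` as an internal vertex. -/
def vertexLoad {G : SimpleGraph V} (R : Routing G) (x : V) : ℕ :=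
  (univ.filter fun p : V × V =>
    p.1 ≠ p.2 ∧ x ∈ (R.walk p.1 p.2).support ∧ x ≠ p.1 ∧ x ≠ p.2).card

/-- The load of an edge `e`: the number of paths of the routing traversing `e`. -/
def edgeLoad {G : SimpleGraph V} (R : Routing G) (e : Sym2 V) : ℕ :=
  (univ.filter fun p : V × V => p.1 ≠ p.2 ∧ e ∈ (R.walk p.1 p.2).edges).card

/-- `ξ(G,R)`: the maximum vertex load of the routing `R`. -/
def routingVertexIndex {G : SimpleGraph V} (R : Routing G) : ℕ :=
  univ.sup (vertexLoad R)

/-- `π(G,R)`: the maximum edge load of the routing `R`. (Edges not in `G`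
carry load `0`, so taking the `sup` over all of `Sym2 V` is equivalent.) -/
def routingEdgeIndex {G : SimpleGraph V} (R : Routing G) : ℕ :=
  univ.sup (edgeLoad R)

/-- The vertex-forwarding index `ξ(G)`. -/
noncomputable def xi (G : SimpleGraph V) : ℕ :=
  sInf { k | ∃ R : Routing G, routingVertexIndex R = k }

/-- The vertex-forwarding index over minimal routings, `ξ_m(G)`. -/
noncomputable def xiMin (G : SimpleGraph V) : ℕ :=
  sInf { k | ∃ R : Routing G, R.IsMinimal ∧ routingVertexIndex R = k }

/-- The edge-forwarding index `π(G)`. -/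
noncomputable def piIdx (G : SimpleGraph V) : ℕ :=
  sInf { k | ∃ R : Routing G, routingEdgeIndex R = k }

/-- The edge-forwarding index over minimal routings, `π_m(G)`. -/
noncomputable def piMinIdx (G : SimpleGraph V) : ℕ :=
  sInf { k | ∃ R : Routing G, R.IsMinimal ∧ routingEdgeIndex R = k }

end Forwarding

namespace SimpleGraph.Walk

variable {V : Type*} [DecidableEq V] {G : SimpleGraph V} {u v x : V}
  [Fintype (G.neighborSet x)]

lemma mem_incidenceFinset_filter_mem_edges {w : G.Walk u v} {e : Sym2 V} (he : e ∈ w.edges)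
    (hxe : x ∈ e) : e ∈ {e ∈ G.incidenceFinset x | e ∈ w.edges} :=
  mem_filter.mpr ⟨(G.mem_incidenceFinset _ _).mpr ⟨w.edges_subset_edgeSet he, hxe⟩, he⟩

lemma one_le_card_incidenceFinset_filter_mem_edges (w : G.Walk u v) (huv : u ≠ v)
    (hx : x = u ∨ x = v) : 1 ≤ #{e ∈ G.incidenceFinset x | e ∈ w.edges} := by
  have hnil := not_nil_of_ne (p := w) huv
  refine Finset.card_pos.mpr ?_
  rcases hx with rfl | rfl
  · exact ⟨_, mem_incidenceFinset_filter_mem_edges (w.mk_start_snd_mem_edges hnil)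
      (Sym2.mem_mk_left _ _)⟩
  · exact ⟨_, mem_incidenceFinset_filter_mem_edges (w.mk_penultimate_end_mem_edges hnil)
      (Sym2.mem_mk_right _ _)⟩

/-- The last edge before `x` and the first edge after it are distinct because a path repeats
no edge. -/
lemma IsPath.two_le_card_incidenceFinset_filter_mem_edges {w : G.Walk u v} (hw : w.IsPath)
    (hx : x ∈ w.support) (hux : x ≠ u) (hvx : x ≠ v) :
    2 ≤ #{e ∈ G.incidenceFinset x | e ∈ w.edges} := by
  set w₁ := w.takeUntil x hx
  set w₂ := w.dropUntil x hx
  have hnil₁ : ¬w₁.Nil := not_nil_of_ne hux.symm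
  have hnil₂ : ¬w₂.Nil := not_nil_of_ne hvx
  have hdisj : w₁.edges.Disjoint w₂.edges := by
    have := hw.edges_nodup
    rw [← w.take_spec hx, edges_append] at this
    exact List.disjoint_of_nodup_append this
  have he₁ := w₁.mk_penultimate_end_mem_edges hnil₁
  have he₂ := w₂.mk_start_snd_mem_edges hnil₂
  exact Finset.one_lt_card.mpr
    ⟨_, mem_incidenceFinset_filter_mem_edges (w.edges_takeUntil_subset_edges hx he₁)
      (Sym2.mem_mk_right _ _),
     _, mem_incidenceFinset_filter_mem_edges (w.edges_dropUntil_subset_edges hx he₂)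
      (Sym2.mem_mk_left _ _),
     fun h => hdisj he₁ (h ▸ he₂)⟩

end SimpleGraph.Walk

lemma Finset.card_singleton_product_compl_union_compl_product_singleton {α : Type*}
    [Fintype α] [DecidableEq α] (x : α) :
    #(({x} ×ˢ {x}ᶜ) ∪ ({x}ᶜ ×ˢ {x}) : Finset (α × α)) = 2 * (Fintype.card α - 1) := by
  have hdisj : Disjoint ({x} ×ˢ {x}ᶜ : Finset (α × α)) ({x}ᶜ ×ˢ {x}) :=
    disjoint_left.mpr fun p h₁ h₂ => (mem_compl.mp (mem_product.mp h₂).1) (mem_product.mp h₁).1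
  rw [card_union_of_disjoint hdisj, card_product, card_product, card_singleton, card_compl,
    card_singleton]
  ring

namespace Forwarding

variable {V : Type*} [Fintype V] [DecidableEq V] {G : SimpleGraph V}

noncomputable def Routing.ofConnected (hG : G.Connected) : Routing G where
  walk x y := (hG.preconnected x y).some.toPath
  isPath x y := (hG.preconnected x y).some.toPath.2

lemma xi_le_routingVertexIndex (R : Routing G) : xi G ≤ routingVertexIndex R :=
  Nat.sInf_le ⟨R, rfl⟩

lemma exists_routingEdgeIndex_eq_piIdx (hG : G.Connected) :
    ∃ R : Routing G, routingEdgeIndex R = piIdx G :=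
  Nat.sInf_mem (s := {k | ∃ R : Routing G, routingEdgeIndex R = k})
    ⟨_, Routing.ofConnected hG, rfl⟩

variable [DecidableRel G.Adj]

lemma sum_edgeLoad_incidenceFinset (R : Routing G) (x : V) :
    ∑ e ∈ G.incidenceFinset x, edgeLoad R e =
      ∑ p : V × V with p.1 ≠ p.2, #{e ∈ G.incidenceFinset x | e ∈ (R.walk p.1 p.2).edges} := by
  simp only [edgeLoad, card_filter, sum_filter, ite_and]
  rw [sum_comm]
  simp only [sum_ite_irrel, sum_const_zero]

lemma two_mul_vertexLoad_add_le_sum_edgeLoad (R : Routing G) (x : V) :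
    2 * vertexLoad R x + 2 * (Fintype.card V - 1) ≤
      ∑ e ∈ G.incidenceFinset x, edgeLoad R e := by
  set through : Finset (V × V) :=
    {p | p.1 ≠ p.2 ∧ x ∈ (R.walk p.1 p.2).support ∧ x ≠ p.1 ∧ x ≠ p.2}
  set atEnd : Finset (V × V) := ({x} ×ˢ {x}ᶜ) ∪ ({x}ᶜ ×ˢ {x})
  set load : V × V → ℕ := fun p => #{e ∈ G.incidenceFinset x | e ∈ (R.walk p.1 p.2).edges}
  have mem_atEnd {p : V × V} : p ∈ atEnd ↔ (p.1 = x ∧ p.2 ≠ x) ∨ (p.1 ≠ x ∧ p.2 = x) := by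
    simp only [atEnd, mem_union, mem_product, mem_singleton, mem_compl]
  have hdisj : Disjoint through atEnd := by
    refine disjoint_left.mpr fun p hthrough hend => ?_
    simp only [through, mem_filter] at hthrough
    rcases mem_atEnd.mp hend with ⟨h, -⟩ | ⟨-, h⟩
    exacts [hthrough.2.2.2.1 h.symm, hthrough.2.2.2.2 h.symm]
  have hsub : through ∪ atEnd ⊆ univ.filter fun p : V × V => p.1 ≠ p.2 := by
    intro p hp
    simp only [mem_union, through, mem_filter, mem_univ, true_and, mem_atEnd] at hp
    simp only [mem_filter, mem_univ, true_and]
    rcases hp with h | ⟨h₁, h₂⟩ | ⟨h₁, h₂⟩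
    exacts [h.1, h₁ ▸ h₂.symm, h₂ ▸ h₁]
  have hthrough : ∀ p ∈ through, 2 ≤ load p := fun p hp => by
    simp only [through, mem_filter] at hp
    exact (R.isPath p.1 p.2).two_le_card_incidenceFinset_filter_mem_edges hp.2.2.1 hp.2.2.2.1
      hp.2.2.2.2
  have hatEnd : ∀ p ∈ atEnd, 1 ≤ load p := fun p hp => by
    rcases mem_atEnd.mp hp with ⟨h₁, h₂⟩ | ⟨h₁, h₂⟩
    · exact (R.walk p.1 p.2).one_le_card_incidenceFinset_filter_mem_edges
        (h₁ ▸ h₂.symm) (.inl h₁.symm)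
    · exact (R.walk p.1 p.2).one_le_card_incidenceFinset_filter_mem_edges
        (h₂ ▸ h₁) (.inr h₂.symm)
  calc 2 * vertexLoad R x + 2 * (Fintype.card V - 1)
      = ∑ _p ∈ through, 2 + ∑ _p ∈ atEnd, 1 := by
        rw [sum_const, sum_const, smul_eq_mul, smul_eq_mul, mul_one, mul_comm,
          card_singleton_product_compl_union_compl_product_singleton]
        rfl
    _ ≤ ∑ p ∈ through, load p + ∑ p ∈ atEnd, load p :=
        add_le_add (sum_le_sum hthrough) (sum_le_sum hatEnd)
    _ = ∑ p ∈ through ∪ atEnd, load p := (sum_union hdisj).symm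
    _ ≤ ∑ p : V × V with p.1 ≠ p.2, load p := sum_le_sum_of_subset hsub
    _ = ∑ e ∈ G.incidenceFinset x, edgeLoad R e := (sum_edgeLoad_incidenceFinset R x).symm

lemma sum_edgeLoad_incidenceFinset_le (R : Routing G) (x : V) :
    ∑ e ∈ G.incidenceFinset x, edgeLoad R e ≤ G.maxDegree * routingEdgeIndex R :=
  calc ∑ e ∈ G.incidenceFinset x, edgeLoad R e
      ≤ #(G.incidenceFinset x) • routingEdgeIndex R :=
        sum_le_card_nsmul _ _ _ fun e _ => le_sup (mem_univ e)
    _ ≤ G.maxDegree * routingEdgeIndex R := by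
        rw [smul_eq_mul, G.card_incidenceFinset_eq_degree]
        exact Nat.mul_le_mul_right _ (G.degree_le_maxDegree x)

lemma two_mul_routingVertexIndex_add_le [Nonempty V] (R : Routing G) :
    2 * routingVertexIndex R + 2 * (Fintype.card V - 1) ≤
      G.maxDegree * routingEdgeIndex R := by
  obtain ⟨x, -, hx⟩ := exists_mem_eq_sup (univ : Finset V) univ_nonempty (vertexLoad R)
  rw [routingVertexIndex, hx]
  exact (two_mul_vertexLoad_add_le_sum_edgeLoad R x).trans
    (sum_edgeLoad_incidenceFinset_le R x)

end Forwarding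

/-- For every connected simple graph `G` on `n` vertices with
maximum degree `Δ`, `2ξ(G) + 2(n-1) ≤ Δ·π(G)`. -/
theorem xi_pi_inequality_a {V : Type*} [Fintype V] [DecidableEq V]
    (G : SimpleGraph V) [DecidableRel G.Adj] (hG : G.Connected) :
    2 * Forwarding.xi G + 2 * (Fintype.card V - 1) ≤
      G.maxDegree * Forwarding.piIdx G := by
  obtain ⟨R, hR⟩ := Forwarding.exists_routingEdgeIndex_eq_piIdx hG
  have := hG.nonempty
  calc 2 * Forwarding.xi G + 2 * (Fintype.card V - 1)
      ≤ 2 * Forwarding.routingVertexIndex R + 2 * (Fintype.card V - 1) := by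
        gcongr
        exact Forwarding.xi_le_routingVertexIndex R
    _ ≤ G.maxDegree * Forwarding.piIdx G :=
        hR ▸ Forwarding.two_mul_routingVertexIndex_add_le R
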